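/- arXiv:0810.4756 — 6 statements merged into one kernel-verified Lean document; each statement's English description precedes it below -/
import Mathlib

section
/- For all k, n ≥ 0, the Charlier polynomials satisfy the symmetry relation C_k(λ,n) = (−1)^{n+k} C_n(λ,k). -/
open Finset

namespace CharlierAux

noncomputable def pp (k j : ℕ) : ℂ := (k.choose j : ℂ) * (-1) ^ (k + j)
noncomputable def bb (L : ℝ) (m : ℕ) : ℂ := (L : ℂ) ^ m / (m.factorial : ℂ)
noncomputable def aa (L : ℝ) (k n : ℕ) : ℂ :=
  ∑ ij ∈ Finset.HasAntidiagonal.antidiagonal n, pp k ij.1 * bb L ij.2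

lemma pp_zero {k j : ℕ} (h : k < j) : pp k j = 0 := by
  simp [pp, Nat.choose_eq_zero_of_lt h]

lemma term_eq (L : ℝ) (hL : (L:ℂ) ≠ 0) {j k n : ℕ} (hj : j ≤ k) (hk : k ≤ n) :
    (-1:ℂ)^k * (L:ℂ)^k * (n.factorial : ℂ) * (pp k j * bb L (n - j))
      = (-1:ℂ)^n * (L:ℂ)^n * (k.factorial : ℂ) * (pp n j * bb L (k - j)) := by
  unfold pp bb
  rw [Nat.cast_choose ℂ hj, Nat.cast_choose ℂ (hj.trans hk),
    pow_sub₀ (L:ℂ) hL (hj.trans hk), pow_sub₀ (L:ℂ) hL hj, pow_add, pow_add]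
  have hfj : ((j.factorial : ℂ)) ≠ 0 := Nat.cast_ne_zero.2 j.factorial_ne_zero
  have h1 : (((k-j).factorial : ℂ)) ≠ 0 := Nat.cast_ne_zero.2 (Nat.factorial_ne_zero _)
  have h2 : (((n-j).factorial : ℂ)) ≠ 0 := Nat.cast_ne_zero.2 (Nat.factorial_ne_zero _)
  field_simp
  ring_nf
  simp [pow_mul', neg_one_sq]

lemma aa_symm_le (L : ℝ) (hL : (L:ℂ) ≠ 0) {k n : ℕ} (hk : k ≤ n) :
    (-1:ℂ)^k * (L:ℂ)^k * (n.factorial : ℂ) * aa L k n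
      = (-1:ℂ)^n * (L:ℂ)^n * (k.factorial : ℂ) * aa L n k := by
  unfold aa
  rw [Finset.Nat.sum_antidiagonal_eq_sum_range_succ_mk,
    Finset.Nat.sum_antidiagonal_eq_sum_range_succ_mk]
  have htr : ∑ j ∈ range (n+1), pp k j * bb L (n-j)
      = ∑ j ∈ range (k+1), pp k j * bb L (n-j) := by
    refine (Finset.sum_subset (by simpa using Nat.succ_le_succ hk) ?_).symm
    intro j _ hj
    rw [pp_zero (by simpa using hj), zero_mul]
  rw [htr]
  have h2 : ∑ j ∈ range (k+1), (-1:ℂ)^k * (L:ℂ)^k * (n.factorial : ℂ) * (pp k j * bb L (n-j))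
      = ∑ j ∈ range (k+1), (-1:ℂ)^n * (L:ℂ)^n * (k.factorial : ℂ) * (pp n j * bb L (k-j)) :=
    Finset.sum_congr rfl fun j hj =>
      term_eq L hL (Nat.lt_succ_iff.mp (Finset.mem_range.mp hj)) hk
  rw [← Finset.mul_sum, ← Finset.mul_sum] at h2
  exact h2

lemma aa_symm (L : ℝ) (hL : (L:ℂ) ≠ 0) (k n : ℕ) :
    (-1:ℂ)^k * (L:ℂ)^k * (n.factorial : ℂ) * aa L k n
      = (-1:ℂ)^n * (L:ℂ)^n * (k.factorial : ℂ) * aa L n k := by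
  rcases le_total k n with h | h
  · exact aa_symm_le L hL h
  · exact (aa_symm_le L hL h).symm

lemma summable_pp (k : ℕ) (z : ℂ) : Summable fun j => ‖pp k j * z ^ j‖ := by
  refine summable_of_ne_finset_zero (s := Finset.range (k+1)) ?_
  intro j hj
  rw [pp_zero (by simpa using hj), zero_mul, norm_zero]

lemma sum_pp (k : ℕ) (z : ℂ) : ∑' j, pp k j * z ^ j = (z - 1) ^ k := by
  rw [tsum_eq_sum (s := Finset.range (k+1))
    (fun j hj => by rw [pp_zero (by simpa using hj), zero_mul])]
  rw [sub_eq_add_neg, add_pow]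
  refine Finset.sum_congr rfl fun j hj => ?_
  have hjk : j ≤ k := Nat.lt_succ_iff.mp (Finset.mem_range.mp hj)
  have hs : ((-1:ℂ)) ^ (k + j) = (-1) ^ (k - j) := by
    rw [show k + j = (k - j) + 2 * j by omega, pow_add, pow_mul, neg_one_sq, one_pow, mul_one]
  simp only [pp, hs]
  ring

lemma bb_mul (L : ℝ) (m : ℕ) (z : ℂ) :
    bb L m * z ^ m = ((L:ℂ) * z) ^ m / (m.factorial : ℂ) := by
  rw [bb, mul_pow]; ring

lemma summable_bb (L : ℝ) (z : ℂ) : Summable fun m => ‖bb L m * z ^ m‖ := by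
  have : (fun m => ‖bb L m * z ^ m‖) = fun m => ‖(L:ℂ) * z‖ ^ m / (m.factorial : ℝ) := by
    funext m
    rw [bb_mul, norm_div, norm_pow]
    norm_num
  rw [this]
  exact Real.summable_pow_div_factorial _

lemma sum_bb (L : ℝ) (z : ℂ) : ∑' m, bb L m * z ^ m = Complex.exp ((L:ℂ) * z) := by
  simp only [bb_mul]
  rw [Complex.exp_eq_exp_ℂ, NormedSpace.exp_eq_tsum_div]

lemma antidiag_sum (L : ℝ) (k n : ℕ) (z : ℂ) :
    ∑ ij ∈ Finset.HasAntidiagonal.antidiagonal n, (pp k ij.1 * z ^ ij.1) * (bb L ij.2 * z ^ ij.2)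
      = aa L k n * z ^ n := by
  rw [aa, Finset.sum_mul]
  refine Finset.sum_congr rfl fun ij hij => ?_
  have : ij.1 + ij.2 = n := Finset.HasAntidiagonal.mem_antidiagonal.mp hij
  rw [← this, pow_add]; ring

lemma sum_aa (L : ℝ) (k : ℕ) (z : ℂ) :
    ∑' n, aa L k n * z ^ n = (z - 1) ^ k * Complex.exp ((L:ℂ) * z) := by
  rw [← sum_pp k z, ← sum_bb L z,
    tsum_mul_tsum_eq_tsum_sum_antidiagonal_of_summable_norm (summable_pp k z) (summable_bb L z)]
  exact (tsum_congr fun n => (antidiag_sum L k n z).symm)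

lemma summable_aa (L : ℝ) (k : ℕ) (z : ℂ) : Summable fun n => ‖aa L k n * z ^ n‖ := by
  have := summable_norm_sum_mul_antidiagonal_of_summable_norm
    (summable_pp k z) (summable_bb L z)
  simpa only [antidiag_sum] using this

lemma ofScalars_coeff (c : ℕ → ℂ) (n : ℕ) :
    (FormalMultilinearSeries.ofScalars ℂ c).coeff n = c n := by
  simp [FormalMultilinearSeries.coeff, FormalMultilinearSeries.ofScalars, List.prod_ofFn]

end CharlierAux

open CharlierAux

theorem charlier_symmetry (L : ℝ) (hL : 0 < L) (C : ℕ → ℕ → ℝ)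
    (hC : ∀ (k : ℕ) (z : ℂ), ∑' n : ℕ,
      (C k n : ℂ) * (L : ℂ) ^ n / (n.factorial : ℂ) * z ^ n
        = (z - 1) ^ k * Complex.exp ((L : ℂ) * z)) :
    ∀ (k n : ℕ), C k n = (-1 : ℝ) ^ (n + k) * C n k := by
  have hLC : (L:ℂ) ≠ 0 := by exact_mod_cast hL.ne'
  set cc : ℕ → ℕ → ℂ := fun k n => (C k n : ℂ) * (L : ℂ) ^ n / (n.factorial : ℂ) with hcc
  have key : ∀ k n, cc k n = aa L k n := by
    intro k
    -- summability at z = 2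
    have hs2 : Summable (fun n => cc k n * (2:ℂ) ^ n) := by
      by_contra h
      have h0 := tsum_eq_zero_of_not_summable h
      rw [hC k 2] at h0
      norm_num at h0
    have hnorm2 : Summable fun n => ‖cc k n‖ * ((2 : NNReal) : ℝ) ^ n := by
      have := (summable_norm_iff.2 hs2)
      simpa [norm_mul, norm_pow] using this
    let p := FormalMultilinearSeries.ofScalars ℂ (cc k)
    let q := FormalMultilinearSeries.ofScalars ℂ (aa L k)
    have hpr : 0 < p.radius := by
      refine lt_of_lt_of_le (by norm_num) (p.le_radius_of_summable (r := 2) ?_)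
      simpa [p, FormalMultilinearSeries.ofScalars_norm, ofScalars_coeff] using hnorm2
    have hqr : 0 < q.radius := by
      refine lt_of_lt_of_le (by norm_num) (q.le_radius_of_summable (r := 2) ?_)
      have := summable_aa L k (2:ℂ)
      simpa [q, FormalMultilinearSeries.ofScalars_norm, ofScalars_coeff, norm_mul, norm_pow] using this
    have hpsum : p.sum = fun z => (z - 1) ^ k * Complex.exp ((L:ℂ) * z) := by
      funext z
      have h1 : p.sum z = ∑' n, cc k n • z ^ n :=
        FormalMultilinearSeries.ofScalars_sum_eq (cc k) z
      simpa only [smul_eq_mul] using h1.trans (hC k z)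
    have hqsum : q.sum = fun z => (z - 1) ^ k * Complex.exp ((L:ℂ) * z) := by
      funext z
      have h1 : q.sum z = ∑' n, aa L k n • z ^ n :=
        FormalMultilinearSeries.ofScalars_sum_eq (aa L k) z
      simpa only [smul_eq_mul] using h1.trans (sum_aa L k z)
    have hp : HasFPowerSeriesAt (fun z => (z - 1) ^ k * Complex.exp ((L:ℂ) * z)) p 0 := by
      rw [← hpsum]; exact (p.hasFPowerSeriesOnBall hpr).hasFPowerSeriesAt
    have hq : HasFPowerSeriesAt (fun z => (z - 1) ^ k * Complex.exp ((L:ℂ) * z)) q 0 := by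
      rw [← hqsum]; exact (q.hasFPowerSeriesOnBall hqr).hasFPowerSeriesAt
    have hpq : p = q := hp.eq_formalMultilinearSeries hq
    intro n
    have h1 := congrArg (fun (P : FormalMultilinearSeries ℂ ℂ ℂ) => P n (fun _ => (1:ℂ))) hpq
    simpa [p, q, ofScalars_coeff] using h1
  intro k n
  have S := aa_symm L hLC k n
  rw [← key k n, ← key n k] at S
  have hfn : ((n.factorial : ℂ)) ≠ 0 := Nat.cast_ne_zero.2 (Nat.factorial_ne_zero _)
  have hfk : ((k.factorial : ℂ)) ≠ 0 := Nat.cast_ne_zero.2 (Nat.factorial_ne_zero _)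
  have ek : (-1:ℂ)^k * (-1)^k = 1 := by rw [← mul_pow]; norm_num
  have en : (-1:ℂ)^n * (-1)^n = 1 := by rw [← mul_pow]; norm_num
  have hLk : ((L:ℂ))^k ≠ 0 := pow_ne_zero _ hLC
  have hLn : ((L:ℂ))^n ≠ 0 := pow_ne_zero _ hLC
  simp only [hcc] at S
  have S2 : (-1:ℂ)^k * (C k n : ℂ) = (-1)^n * (C n k : ℂ) := by
    field_simp at S
    have hcancel : ((L:ℂ)^k * (L:ℂ)^n * (n.factorial : ℂ) * (k.factorial : ℂ)) ≠ 0 := by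
      simp [hLk, hLn, hfn, hfk]
    apply mul_left_cancel₀ hcancel
    linear_combination ((L:ℂ)^k * (L:ℂ)^n * (n.factorial : ℂ) * (k.factorial : ℂ)) * S
  have hfinal : (C k n : ℂ) = (-1:ℂ)^(n+k) * (C n k : ℂ) := by
    rw [pow_add]
    linear_combination (-1:ℂ)^k * S2 - (C k n : ℂ) * ek
  exact_mod_cast hfinal
end

section
/- The Charlier polynomials are orthogonal with respect to the Poisson measure: for all k, ℓ ≥ 0, ∑_{n≥0} C_k(λ,n) C_ℓ(λ,n) e^{−λ} λ^n/n! = δ_{k,ℓ} · k!/λ^k. -/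
open Finset
open scoped ENNReal NNReal

lemma chooseAlt (k m : ℕ) :
    ∑ i ∈ range (k + 1), (-1 : ℝ) ^ (k - i) * (k.choose i) * (i.choose m)
      = if k = m then 1 else 0 := by
  rcases lt_or_ge k m with h | h
  · rw [if_neg h.ne]
    refine Finset.sum_eq_zero fun i hi => ?_
    rw [Nat.choose_eq_zero_of_lt (lt_of_le_of_lt (by simp only [mem_range] at hi; omega : i ≤ k) h)]
    push_cast; ring
  · -- m ≤ k
    have hsub : Finset.Ico m (k + 1) ⊆ range (k + 1) := by
      intro x hx; simp only [mem_Ico, mem_range] at *; omega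
    rw [← Finset.sum_subset hsub (fun x _ hx => by
      simp only [mem_Ico, mem_range] at *
      rw [Nat.choose_eq_zero_of_lt (by omega : x < m)]; push_cast; ring)]
    rw [Finset.sum_Ico_eq_sum_range]
    have hkm : k + 1 - m = (k - m) + 1 := by omega
    rw [hkm]
    have key : ∀ s ∈ range ((k - m) + 1),
        (-1 : ℝ) ^ (k - (m + s)) * (k.choose (m + s)) * ((m + s).choose m)
          = (k.choose m : ℝ) * ((-1 : ℝ) ^ (k - m) * ((-1 : ℝ) ^ s * ((k - m).choose s))) := by
      intro s hs
      simp only [mem_range] at hs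
      have h1 : m + s ≤ k := by omega
      have h2 := Nat.choose_mul (n := k) (Nat.le_add_right m s)
      have h2' : (k.choose (m + s) : ℝ) * ((m + s).choose m)
          = (k.choose m : ℝ) * ((k - m).choose (m + s - m)) := by exact_mod_cast h2
      have h3 : m + s - m = s := by omega
      rw [h3] at h2'
      have h4 : (-1 : ℝ) ^ (k - (m + s)) = (-1 : ℝ) ^ (k - m) * (-1 : ℝ) ^ s := by
        have : (k - m) = (k - (m + s)) + s := by omega
        rw [this, pow_add]
        have hss : ((-1 : ℝ) ^ s) * ((-1:ℝ) ^ s) = 1 := by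
          rw [← pow_add, ← two_mul, pow_mul]; norm_num
        calc (-1:ℝ) ^ (k - (m+s)) = (-1:ℝ) ^ (k - (m+s)) * ((-1:ℝ)^s * (-1:ℝ)^s) := by rw [hss]; ring
          _ = (-1:ℝ) ^ (k - (m + s)) * (-1:ℝ) ^ s * (-1:ℝ) ^ s := by ring
      rw [h4]
      calc (-1:ℝ) ^ (k-m) * (-1:ℝ)^s * ↑(k.choose (m+s)) * ↑((m+s).choose m)
          = (-1:ℝ) ^ (k-m) * (-1:ℝ)^s * (↑(k.choose (m+s)) * ↑((m+s).choose m)) := by ring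
        _ = (-1:ℝ) ^ (k-m) * (-1:ℝ)^s * (↑(k.choose m) * ↑((k-m).choose s)) := by rw [h2']
        _ = ↑(k.choose m) * ((-1:ℝ) ^ (k-m) * ((-1:ℝ)^s * ↑((k-m).choose s))) := by ring
    rw [Finset.sum_congr rfl key, ← Finset.mul_sum, ← Finset.mul_sum]
    have halt : ∑ s ∈ range ((k - m) + 1), (-1 : ℝ) ^ s * ((k - m).choose s)
        = if k - m = 0 then 1 else 0 := by
      have := Int.alternating_sum_range_choose (n := k - m)
      have := congrArg (fun z : ℤ => (z : ℝ)) this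
      push_cast at this
      simpa using this
    rw [halt]
    rcases eq_or_ne k m with rfl | hne
    · simp
    · rw [if_neg (by omega : ¬ k - m = 0), if_neg hne]; ring

lemma expShiftR (L : ℝ) (r : ℕ) :
    HasSum (fun m : ℕ => (m.choose r : ℝ) * L ^ m / m.factorial)
      (Real.exp L * L ^ r / r.factorial) := by
  set f : ℕ → ℝ := fun m => (m.choose r : ℝ) * L ^ m / m.factorial with hf
  have base : HasSum (fun s : ℕ => L ^ s / s.factorial) (Real.exp L) := by
    rw [Real.exp_eq_exp_ℝ]
    exact NormedSpace.expSeries_div_hasSum_exp L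
  have hshift : HasSum (fun s : ℕ => f (s + r)) (L ^ r / r.factorial * Real.exp L) := by
    have hmul := base.mul_left (L ^ r / r.factorial)
    refine hmul.congr_fun fun s => ?_
    have h := Nat.add_choose_mul_factorial_mul_factorial s r
    have h' : ((s + r).choose r : ℝ) * s.factorial * r.factorial = (s + r).factorial := by
      exact_mod_cast h
    have hs : (s.factorial : ℝ) ≠ 0 := Nat.cast_ne_zero.2 s.factorial_ne_zero
    have hr : (r.factorial : ℝ) ≠ 0 := Nat.cast_ne_zero.2 r.factorial_ne_zero
    have hsr : ((s + r).factorial : ℝ) ≠ 0 := Nat.cast_ne_zero.2 (s + r).factorial_ne_zero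
    simp only [hf]
    rw [div_mul_div_comm, div_eq_div_iff hsr (by positivity), pow_add, ← h']
    ring
  have := (hasSum_nat_add_iff (f := f) r).mp hshift
  have hzero : ∑ i ∈ range r, f i = 0 := by
    refine Finset.sum_eq_zero fun i hi => ?_
    simp only [mem_range] at hi
    simp [hf, Nat.choose_eq_zero_of_lt hi]
  rw [hzero, add_zero] at this
  have hrw : L ^ r / ↑r.factorial * Real.exp L = Real.exp L * L ^ r / r.factorial := by ring
  rwa [hrw] at this

lemma hasSumW (L : ℝ) (i j : ℕ) :
    HasSum (fun n : ℕ => (n.choose i : ℝ) * n.choose j * L ^ n / n.factorial)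
      (∑ r ∈ range (i + 1),
        (j.choose (i - r) : ℝ) * L ^ j / j.factorial * (Real.exp L * L ^ r / r.factorial)) := by
  set f : ℕ → ℝ := fun n => (n.choose i : ℝ) * n.choose j * L ^ n / n.factorial with hf
  have hshift : HasSum (fun m : ℕ => f (m + j))
      (∑ r ∈ range (i + 1),
        (j.choose (i - r) : ℝ) * L ^ j / j.factorial * (Real.exp L * L ^ r / r.factorial)) := by
    have hterm : ∀ r ∈ range (i + 1), HasSum
        (fun m : ℕ => (j.choose (i - r) : ℝ) * L ^ j / j.factorial
          * ((m.choose r : ℝ) * L ^ m / m.factorial))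
        ((j.choose (i - r) : ℝ) * L ^ j / j.factorial * (Real.exp L * L ^ r / r.factorial)) :=
      fun r _ => (expShiftR L r).mul_left _
    have hsum := hasSum_sum hterm
    refine hsum.congr_fun fun m => ?_
    -- show ∑ r ... = f (m + j)
    have hfac : ((m + j).choose j : ℝ) * m.factorial * j.factorial = (m + j).factorial := by
      exact_mod_cast Nat.add_choose_mul_factorial_mul_factorial m j
    have hvdm : ((m + j).choose i : ℕ) = ∑ r ∈ range (i + 1), m.choose r * j.choose (i - r) := by
      rw [Nat.add_choose_eq, Finset.Nat.sum_antidiagonal_eq_sum_range_succ_mk]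
    have hm : (m.factorial : ℝ) ≠ 0 := Nat.cast_ne_zero.2 m.factorial_ne_zero
    have hj : (j.factorial : ℝ) ≠ 0 := Nat.cast_ne_zero.2 j.factorial_ne_zero
    have hmj : ((m + j).factorial : ℝ) ≠ 0 := Nat.cast_ne_zero.2 (m + j).factorial_ne_zero
    have step1 : f (m + j) = ((m + j).choose i : ℝ) * L ^ (m + j) / (m.factorial * j.factorial) := by
      simp only [hf]
      rw [div_eq_div_iff hmj (by positivity), ← hfac]
      ring
    rw [step1, hvdm]
    push_cast
    rw [Finset.sum_mul, Finset.sum_div]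
    refine Finset.sum_congr rfl fun r hr => ?_
    rw [pow_add]
    field_simp
  have := (hasSum_nat_add_iff (f := f) j).mp hshift
  have hzero : ∑ n ∈ range j, f n = 0 := by
    refine Finset.sum_eq_zero fun n hn => ?_
    simp only [mem_range] at hn
    simp [hf, Nat.choose_eq_zero_of_lt hn]
  rwa [hzero, add_zero] at this

lemma hasFPS (a : ℕ → ℂ) (f : ℂ → ℂ)
    (hsum : Summable fun n => ‖a n‖ * (1/2 : ℝ) ^ n)
    (hz : ∀ z : ℂ, ‖z‖ < (1/2 : ℝ) → HasSum (fun n => a n * z ^ n) (f z)) :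
    HasFPowerSeriesOnBall f (FormalMultilinearSeries.ofScalars ℂ a) 0 (1/2) := by
  constructor
  · have h : ((1/2 : NNReal) : ℝ≥0∞) ≤ (FormalMultilinearSeries.ofScalars ℂ a).radius := by
      apply FormalMultilinearSeries.le_radius_of_summable
      refine hsum.congr fun n => ?_
      rw [FormalMultilinearSeries.ofScalars_norm]
      norm_num
    convert h using 1
    simp
  · norm_num
  · intro y hy
    have hy' : ‖y‖ < (1/2 : ℝ) := by
      simp only [EMetric.mem_ball, edist_eq_enorm_sub, sub_zero] at hy
      have : (‖y‖₊ : ℝ≥0∞) < ((1/2 : NNReal) : ℝ≥0∞) := by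
        convert hy using 1 <;> norm_num [enorm_eq_nnnorm]
      rw [ENNReal.coe_lt_coe] at this
      exact_mod_cast this
    have := hz y hy'
    rw [show (0 : ℂ) + y = y by ring] at *
    refine this.congr_fun fun n => ?_
    rw [FormalMultilinearSeries.ofScalars_apply_eq]
    simp [smul_eq_mul, mul_comm]

lemma coeffs_eq (a b : ℕ → ℂ) (f : ℂ → ℂ)
    (ha : Summable fun n => ‖a n‖ * (1/2 : ℝ) ^ n)
    (hb : Summable fun n => ‖b n‖ * (1/2 : ℝ) ^ n)
    (hza : ∀ z : ℂ, ‖z‖ < (1/2 : ℝ) → HasSum (fun n => a n * z ^ n) (f z))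
    (hzb : ∀ z : ℂ, ‖z‖ < (1/2 : ℝ) → HasSum (fun n => b n * z ^ n) (f z)) :
    a = b :=
  FormalMultilinearSeries.ofScalars_series_injective ℂ ℂ
    (((hasFPS a f ha hza).hasFPowerSeriesAt).eq_formalMultilinearSeries
      ((hasFPS b f hb hzb).hasFPowerSeriesAt))

-- HasSum for the true coefficient sequence, for every z
lemma hasSumB (L : ℝ) (hL : 0 < L) (k : ℕ) (z : ℂ) :
    HasSum (fun n : ℕ => (∑ j ∈ range (k + 1),
        (-1 : ℂ) ^ (k - j) * (k.choose j) * (n.descFactorial j) / (L : ℂ) ^ j)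
        * ((L : ℂ) ^ n / n.factorial) * z ^ n)
      ((z - 1) ^ k * Complex.exp ((L : ℂ) * z)) := by
  have hLne : (L : ℂ) ≠ 0 := by
    simp only [ne_eq, Complex.ofReal_eq_zero]; exact hL.ne'
  set w : ℂ := (L : ℂ) * z with hw
  have hexp : HasSum (fun m : ℕ => w ^ m / m.factorial) (Complex.exp w) := by
    rw [Complex.exp_eq_exp_ℂ]
    exact NormedSpace.expSeries_div_hasSum_exp w
  -- each j term
  have hterm : ∀ j ∈ range (k + 1),
      HasSum (fun n : ℕ => ((-1 : ℂ) ^ (k - j) * (k.choose j) / (L : ℂ) ^ j)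
          * ((n.descFactorial j : ℂ) * w ^ n / n.factorial))
        (((-1 : ℂ) ^ (k - j) * (k.choose j) / (L : ℂ) ^ j) * (w ^ j * Complex.exp w)) := by
    intro j _
    refine HasSum.mul_left _ ?_
    set f : ℕ → ℂ := fun n => (n.descFactorial j : ℂ) * w ^ n / n.factorial with hf
    have hshift : HasSum (fun m : ℕ => f (m + j)) (w ^ j * Complex.exp w) := by
      refine (hexp.mul_left (w ^ j)).congr_fun fun m => ?_
      have hfac : ((m + j).choose j : ℂ) * m.factorial * j.factorial = (m + j).factorial := by
        exact_mod_cast Nat.add_choose_mul_factorial_mul_factorial m j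
      have hdesc : ((m + j).descFactorial j : ℂ) = j.factorial * (m + j).choose j := by
        exact_mod_cast Nat.descFactorial_eq_factorial_mul_choose (m + j) j
      have hm : (m.factorial : ℂ) ≠ 0 := Nat.cast_ne_zero.2 m.factorial_ne_zero
      have hmj : ((m + j).factorial : ℂ) ≠ 0 := Nat.cast_ne_zero.2 (m + j).factorial_ne_zero
      simp only [hf]
      rw [hdesc, show w ^ j * (w ^ m / (m.factorial : ℂ)) = (w ^ j * w ^ m) / (m.factorial : ℂ) from by ring,
        div_eq_div_iff hmj hm, ← hfac, pow_add]
      ring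
    have := (hasSum_nat_add_iff (f := f) j).mp hshift
    have hzero : ∑ n ∈ range j, f n = 0 := by
      refine Finset.sum_eq_zero fun n hn => ?_
      simp only [mem_range] at hn
      simp [hf, Nat.descFactorial_eq_zero_iff_lt.2 hn]
    rwa [hzero, add_zero] at this
  have hsum := hasSum_sum hterm
  have htarget : ∑ j ∈ range (k + 1),
      ((-1 : ℂ) ^ (k - j) * (k.choose j) / (L : ℂ) ^ j) * (w ^ j * Complex.exp w)
      = (z - 1) ^ k * Complex.exp ((L : ℂ) * z) := by
    rw [show z - 1 = z + (-1) by ring, add_pow, Finset.sum_mul]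
    refine Finset.sum_congr rfl fun j hj => ?_
    have : w ^ j = (L : ℂ) ^ j * z ^ j := by rw [hw, mul_pow]
    rw [this]
    field_simp
    ring
  rw [htarget] at hsum
  refine hsum.congr_fun fun n => ?_
  rw [Finset.sum_mul, Finset.sum_mul]
  refine Finset.sum_congr rfl fun j hj => ?_
  rw [hw, mul_pow]
  ring

lemma keyC (L : ℝ) (hL : 0 < L) (C : ℕ → ℕ → ℝ)
    (hC : ∀ (k : ℕ) (z : ℂ), ∑' n : ℕ,
      (C k n : ℂ) * (L : ℂ) ^ n / (n.factorial : ℂ) * z ^ n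
        = (z - 1) ^ k * Complex.exp ((L : ℂ) * z)) (k n : ℕ) :
    (C k n : ℝ) = ∑ j ∈ range (k + 1),
      (-1 : ℝ) ^ (k - j) * (k.choose j) * (n.descFactorial j) / L ^ j := by
  have hLne : (L : ℂ) ≠ 0 := by
    simp only [ne_eq, Complex.ofReal_eq_zero]; exact hL.ne'
  let a : ℕ → ℂ := fun n => (C k n : ℂ) * (L : ℂ) ^ n / (n.factorial : ℂ)
  let b : ℕ → ℂ := fun n => (∑ j ∈ range (k + 1),
      (-1 : ℂ) ^ (k - j) * (k.choose j) * (n.descFactorial j) / (L : ℂ) ^ j)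
      * ((L : ℂ) ^ n / (n.factorial : ℂ))
  let f : ℂ → ℂ := fun z => (z - 1) ^ k * Complex.exp ((L : ℂ) * z)
  have hzb : ∀ z : ℂ, HasSum (fun n => b n * z ^ n) (f z) := fun z => hasSumB L hL k z
  have hbs : Summable fun n => ‖b n‖ * (1/2 : ℝ) ^ n := by
    have h1 := (hzb (1/2 : ℂ)).summable
    have h2 := summable_norm_iff.mpr h1
    refine h2.congr fun n => ?_
    rw [norm_mul, norm_pow]
    norm_num
  have hs2 : Summable fun n : ℕ => a n * (1/2 : ℂ) ^ n := by
    by_contra h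
    have h0 := tsum_eq_zero_of_not_summable h
    have h1 := hC k (1/2 : ℂ)
    have h2 : ∑' n : ℕ, (C k n : ℂ) * (L : ℂ) ^ n / (n.factorial : ℂ) * (1/2 : ℂ) ^ n
        = ∑' n : ℕ, a n * (1/2 : ℂ) ^ n := rfl
    rw [h2, h0] at h1
    have h3 : ((1/2 : ℂ) - 1) ^ k * Complex.exp ((L : ℂ) * (1/2 : ℂ)) ≠ 0 :=
      mul_ne_zero (pow_ne_zero _ (by norm_num)) (Complex.exp_ne_zero _)
    exact h3 h1.symm
  have has : Summable fun n => ‖a n‖ * (1/2 : ℝ) ^ n := by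
    have h2 := summable_norm_iff.mpr hs2
    refine h2.congr fun n => ?_
    rw [norm_mul, norm_pow]
    norm_num
  have hza : ∀ z : ℂ, ‖z‖ < (1/2 : ℝ) → HasSum (fun n => a n * z ^ n) (f z) := by
    intro z hz
    have hsummable : Summable fun n : ℕ => a n * z ^ n := by
      rw [← summable_norm_iff]
      refine Summable.of_nonneg_of_le (fun n => norm_nonneg _) (fun n => ?_) has
      rw [norm_mul, norm_pow]
      gcongr
    have h := hsummable.hasSum
    have h2 : ∑' n : ℕ, a n * z ^ n = f z := hC k z
    rwa [h2] at h
  have hab : a = b := coeffs_eq a b f has hbs hza (fun z _ => hzb z)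
  have habn : a n = b n := congrFun hab n
  have hfacne : ((L : ℂ) ^ n / (n.factorial : ℂ)) ≠ 0 :=
    div_ne_zero (pow_ne_zero _ hLne) (Nat.cast_ne_zero.2 n.factorial_ne_zero)
  have hmain : (C k n : ℂ) = ∑ j ∈ range (k + 1),
      (-1 : ℂ) ^ (k - j) * (k.choose j) * (n.descFactorial j) / (L : ℂ) ^ j := by
    have : (C k n : ℂ) * ((L : ℂ) ^ n / (n.factorial : ℂ))
        = (∑ j ∈ range (k + 1),
          (-1 : ℂ) ^ (k - j) * (k.choose j) * (n.descFactorial j) / (L : ℂ) ^ j)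
          * ((L : ℂ) ^ n / (n.factorial : ℂ)) := by
      rw [← mul_div_assoc]
      exact habn
    exact mul_right_cancel₀ hfacne this
  have hcast : ((∑ j ∈ range (k + 1),
      (-1 : ℝ) ^ (k - j) * (k.choose j) * (n.descFactorial j) / L ^ j : ℝ) : ℂ)
      = ∑ j ∈ range (k + 1),
      (-1 : ℂ) ^ (k - j) * (k.choose j) * (n.descFactorial j) / (L : ℂ) ^ j := by
    push_cast
    rfl
  exact_mod_cast hmain.trans hcast.symm

theorem charlier_orthogonality (L : ℝ) (hL : 0 < L) (C : ℕ → ℕ → ℝ)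
    (hC : ∀ (k : ℕ) (z : ℂ), ∑' n : ℕ,
      (C k n : ℂ) * (L : ℂ) ^ n / (n.factorial : ℂ) * z ^ n
        = (z - 1) ^ k * Complex.exp ((L : ℂ) * z)) :
    ∀ (k l : ℕ), ∑' n : ℕ,
      C k n * C l n * Real.exp (-L) * L ^ n / (n.factorial : ℝ)
        = if k = l then (k.factorial : ℝ) / L ^ k else 0 := by
  intro k l
  have hLne : L ≠ 0 := hL.ne'
  set α : ℕ → ℝ := fun i => (-1 : ℝ) ^ (k - i) * (k.choose i) * i.factorial / L ^ i with hα
  set β : ℕ → ℝ := fun j => (-1 : ℝ) ^ (l - j) * (l.choose j) * j.factorial / L ^ j with hβ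
  set W : ℕ → ℕ → ℕ → ℝ :=
    fun i j n => (n.choose i : ℝ) * n.choose j * L ^ n / n.factorial with hWdef
  have hpt : ∀ n : ℕ, C k n * C l n * Real.exp (-L) * L ^ n / (n.factorial : ℝ)
      = ∑ i ∈ range (k + 1), ∑ j ∈ range (l + 1),
          α i * β j * Real.exp (-L) * W i j n := by
    intro n
    rw [keyC L hL C hC k n, keyC L hL C hC l n, Finset.sum_mul_sum]
    rw [Finset.sum_mul, Finset.sum_mul, Finset.sum_div]
    refine Finset.sum_congr rfl fun i _ => ?_
    rw [Finset.sum_mul, Finset.sum_mul, Finset.sum_div]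
    refine Finset.sum_congr rfl fun j _ => ?_
    have hdi : (n.descFactorial i : ℝ) = i.factorial * n.choose i := by
      exact_mod_cast Nat.descFactorial_eq_factorial_mul_choose n i
    have hdj : (n.descFactorial j : ℝ) = j.factorial * n.choose j := by
      exact_mod_cast Nat.descFactorial_eq_factorial_mul_choose n j
    simp only [hα, hβ, hWdef, hdi, hdj]
    field_simp
  rw [tsum_congr hpt]
  have hsummW : ∀ i j : ℕ, Summable (fun n => α i * β j * Real.exp (-L) * W i j n) :=
    fun i j => ((hasSumW L i j).mul_left _).summable
  rw [Summable.tsum_finsetSum (fun i _ => summable_sum (fun j _ => hsummW i j))]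
  have hval : ∀ i j : ℕ, ∑' n, α i * β j * Real.exp (-L) * W i j n
      = α i * β j * Real.exp (-L) * ∑ r ∈ range (i + 1),
          (j.choose (i - r) : ℝ) * L ^ j / j.factorial * (Real.exp L * L ^ r / r.factorial) :=
    fun i j => ((hasSumW L i j).mul_left _).tsum_eq
  have hins : ∀ i ∈ range (k + 1),
      ∑' n, (∑ j ∈ range (l + 1), α i * β j * Real.exp (-L) * W i j n)
      = ∑ j ∈ range (l + 1), (∑' n, α i * β j * Real.exp (-L) * W i j n) :=
    fun i _ => Summable.tsum_finsetSum (fun j _ => hsummW i j)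
  rw [Finset.sum_congr rfl hins]
  simp only [hval]
  -- now a purely finite computation
  have hexp1 : Real.exp (-L) * Real.exp L = 1 := by
    rw [← Real.exp_add]; simp
  have step1 : ∀ i ∈ range (k + 1),
      ∑ j ∈ range (l + 1), α i * β j * Real.exp (-L) * ∑ r ∈ range (i + 1),
          (j.choose (i - r) : ℝ) * L ^ j / j.factorial * (Real.exp L * L ^ r / r.factorial)
      = α i * (if l ≤ i then L ^ (i - l) / (i - l).factorial else 0) := by
    intro i _
    have swap : ∑ j ∈ range (l + 1), α i * β j * Real.exp (-L) * ∑ r ∈ range (i + 1),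
          (j.choose (i - r) : ℝ) * L ^ j / j.factorial * (Real.exp L * L ^ r / r.factorial)
        = ∑ r ∈ range (i + 1), (L ^ r / r.factorial) *
            ∑ j ∈ range (l + 1), α i * ((-1 : ℝ) ^ (l - j) * (l.choose j) * (j.choose (i - r))) := by
      calc ∑ j ∈ range (l + 1), α i * β j * Real.exp (-L) * ∑ r ∈ range (i + 1),
              (j.choose (i - r) : ℝ) * L ^ j / j.factorial * (Real.exp L * L ^ r / r.factorial)
          = ∑ j ∈ range (l + 1), ∑ r ∈ range (i + 1), α i * β j * Real.exp (-L) *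
              ((j.choose (i - r) : ℝ) * L ^ j / j.factorial * (Real.exp L * L ^ r / r.factorial)) := by
            exact Finset.sum_congr rfl fun j _ => Finset.mul_sum _ _ _
        _ = ∑ r ∈ range (i + 1), ∑ j ∈ range (l + 1), α i * β j * Real.exp (-L) *
              ((j.choose (i - r) : ℝ) * L ^ j / j.factorial * (Real.exp L * L ^ r / r.factorial)) :=
            Finset.sum_comm
        _ = ∑ r ∈ range (i + 1), (L ^ r / r.factorial) *
              ∑ j ∈ range (l + 1), α i * ((-1 : ℝ) ^ (l - j) * (l.choose j) * (j.choose (i - r))) := by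
            refine Finset.sum_congr rfl fun r _ => ?_
            rw [Finset.mul_sum]
            refine Finset.sum_congr rfl fun j _ => ?_
            simp only [hβ, Real.exp_neg]
            have hj : (j.factorial : ℝ) ≠ 0 := Nat.cast_ne_zero.2 j.factorial_ne_zero
            have hr : (r.factorial : ℝ) ≠ 0 := Nat.cast_ne_zero.2 r.factorial_ne_zero
            have hE : Real.exp L ≠ 0 := Real.exp_ne_zero L
            field_simp
    rw [swap]
    have inner : ∀ r ∈ range (i + 1),
        ∑ j ∈ range (l + 1), α i * ((-1 : ℝ) ^ (l - j) * (l.choose j) * (j.choose (i - r)))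
        = α i * (if l = i - r then 1 else 0) := by
      intro r _
      rw [← Finset.mul_sum]
      congr 1
      have := chooseAlt l (i - r)
      simpa using this
    rw [show (∑ r ∈ range (i + 1), L ^ r / (r.factorial : ℝ) *
          ∑ j ∈ range (l + 1), α i * ((-1 : ℝ) ^ (l - j) * (l.choose j) * (j.choose (i - r))))
        = ∑ r ∈ range (i + 1), L ^ r / (r.factorial : ℝ) * (α i * if l = i - r then 1 else 0)
        from Finset.sum_congr rfl fun r hr => by rw [inner r hr]]
    rcases le_or_gt l i with h | h
    · rw [if_pos h]
      rw [Finset.sum_eq_single_of_mem (i - l) (by simp only [mem_range]; omega)]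
      · rw [if_pos (show l = i - (i - l) by omega), mul_one]
        ring
      · intro r hr hne
        simp only [mem_range] at hr
        rw [if_neg (by omega), mul_zero, mul_zero]
    · rw [if_neg (by omega)]
      rw [Finset.sum_eq_zero, mul_zero]
      intro r hr
      simp only [mem_range] at hr
      rw [if_neg (by omega), mul_zero, mul_zero]
  rw [Finset.sum_congr rfl step1]
  have step2 : ∀ i ∈ range (k + 1),
      α i * (if l ≤ i then L ^ (i - l) / (i - l).factorial else 0)
      = ((l.factorial : ℝ) / L ^ l) * ((-1 : ℝ) ^ (k - i) * (k.choose i) * (i.choose l)) := by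
    intro i _
    rcases le_or_gt l i with h | h
    · rw [if_pos h]
      have hfac : (i.choose l : ℝ) * l.factorial * (i - l).factorial = i.factorial := by
        exact_mod_cast Nat.choose_mul_factorial_mul_factorial h
      have hpow : L ^ (i - l) * L ^ l = L ^ i := by
        rw [← pow_add]; congr 1; omega
      have hil : ((i - l).factorial : ℝ) ≠ 0 := Nat.cast_ne_zero.2 (i - l).factorial_ne_zero
      have hli : (L : ℝ) ^ i ≠ 0 := pow_ne_zero _ hLne
      have hll : (L : ℝ) ^ l ≠ 0 := pow_ne_zero _ hLne
      simp only [hα]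
      rw [← hfac, ← hpow]
      field_simp
    · rw [if_neg (by omega), mul_zero, Nat.choose_eq_zero_of_lt h]
      push_cast
      ring
  rw [Finset.sum_congr rfl step2, ← Finset.mul_sum, chooseAlt k l]
  rcases eq_or_ne k l with rfl | hne
  · simp
  · rw [if_neg hne, if_neg hne, mul_zero]
end

section
/- For every complex number z, |(1+z)e^{−z}| ≤ e^{|z|²/2}. -/
theorem abs_one_add_mul_exp_neg_le (z : ℂ) :
    ‖(1 + z) * Complex.exp (-z)‖ ≤ Real.exp (‖z‖ ^ 2 / 2) := by
  rw [norm_mul, Complex.norm_exp, Complex.neg_re]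
  have hsq : ‖1 + z‖ ^ 2 = 1 + (2 * z.re + ‖z‖ ^ 2) := by
    rw [← Complex.normSq_eq_norm_sq, ← Complex.normSq_eq_norm_sq, Complex.normSq_add]
    simp [Complex.normSq_one, Complex.mul_re]
    ring
  have h2 : ‖1 + z‖ ^ 2 ≤ Real.exp (z.re + ‖z‖ ^ 2 / 2) ^ 2 := by
    rw [hsq]
    have h := Real.add_one_le_exp (2 * z.re + ‖z‖ ^ 2)
    have he : Real.exp (z.re + ‖z‖ ^ 2 / 2) ^ 2
        = Real.exp (2 * z.re + ‖z‖ ^ 2) := by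
      rw [sq, ← Real.exp_add]; ring_nf
    linarith
  have h1 : ‖1 + z‖ ≤ Real.exp (z.re + ‖z‖ ^ 2 / 2) :=
    le_of_pow_le_pow_left₀ two_ne_zero (Real.exp_pos _).le h2
  calc ‖1 + z‖ * Real.exp (-z.re)
      ≤ Real.exp (z.re + ‖z‖ ^ 2 / 2) * Real.exp (-z.re) :=
        mul_le_mul_of_nonneg_right h1 (Real.exp_pos _).le
    _ = Real.exp (‖z‖ ^ 2 / 2) := by rw [← Real.exp_add]; ring_nf
end

section
/- For every integer m ≥ 1 and every complex number z, |(1+z)e^{−z} + ∑_{j=0}^{m} ((j−1)/j!)(−z)^j| ≤ c_m |z|^{m+1} e^{|z|²/2}, where c_m = (1/m!) ∫_0^1 e^{t²/2} (1−t)^{m−1} (m−1+t) dt. -/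
open Complex

noncomputable def Bint (k : ℕ) (w : ℂ) : ℂ :=
  ∫ t in (0:ℝ)..1, (((1 - t) ^ k * ((k : ℝ) + t) : ℝ) : ℂ) * Complex.exp (t * w)

lemma contB (k : ℕ) (w : ℂ) :
    Continuous fun t : ℝ => (((1 - t) ^ k * ((k : ℝ) + t) : ℝ) : ℂ) * Complex.exp (t * w) := by
  fun_prop

lemma Bbase (w : ℂ) : (1 - w) * Complex.exp w - 1 = -(w ^ 2) * Bint 0 w := by
  have hderiv : ∀ t : ℝ, t ∈ Set.uIcc (0:ℝ) 1 →
      HasDerivAt (fun t : ℝ => (1 - (t:ℂ) * w) * Complex.exp ((t:ℂ) * w))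
        (-(w ^ 2) * ((t:ℂ) * Complex.exp ((t:ℂ) * w))) t := by
    intro t _
    have hs : HasDerivAt (fun s : ℂ => s * w) w (t:ℂ) := hasDerivAt_mul_const w
    have h : HasDerivAt (fun s : ℂ => (1 - s * w) * Complex.exp (s * w))
        ((-w) * Complex.exp ((t:ℂ) * w) + (1 - (t:ℂ) * w) * (Complex.exp ((t:ℂ) * w) * w))
        (t:ℂ) := (hs.const_sub 1).mul hs.cexp
    have := h.comp_ofReal
    convert this using 1
    ring
  have hint : IntervalIntegrable (fun t : ℝ => -(w ^ 2) * ((t:ℂ) * Complex.exp ((t:ℂ) * w)))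
      MeasureTheory.volume 0 1 := by
    apply Continuous.intervalIntegrable; fun_prop
  have := intervalIntegral.integral_eq_sub_of_hasDerivAt hderiv hint
  simp only [Complex.ofReal_one, Complex.ofReal_zero, one_mul, zero_mul, Complex.exp_zero,
    mul_one] at this
  rw [intervalIntegral.integral_const_mul] at this
  rw [show ((1:ℂ)-0) = 1 by ring] at this
  rw [← this]
  unfold Bint
  congr 1
  apply intervalIntegral.integral_congr
  intro t _
  push_cast
  ring_nf

lemma Brec (k : ℕ) (w : ℂ) :
    w * Bint (k + 1) w = ((k : ℂ) + 2) * Bint k w - ((k : ℂ) + 1) := by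
  set f' : ℝ → ℂ := fun t =>
      (-((k:ℂ) + 2)) * ((((1 - t) ^ k * ((k : ℝ) + t) : ℝ)) : ℂ) * Complex.exp ((t:ℂ) * w)
      + w * ((((1 - t) ^ (k+1) * (((k:ℕ) + 1 : ℝ) + t) : ℝ)) : ℂ) * Complex.exp ((t:ℂ) * w)
    with hf'
  have hderiv : ∀ t : ℝ, t ∈ Set.uIcc (0:ℝ) 1 →
      HasDerivAt (fun t : ℝ => (1 - (t:ℂ)) ^ (k+1) * (((k:ℂ) + 1) + t) * Complex.exp ((t:ℂ) * w))
        (f' t) t := by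
    intro t _
    have h1 : HasDerivAt (fun s : ℂ => (1 - s) ^ (k+1))
        ((((k:ℕ)+1 : ℕ) : ℂ) * (1 - (t:ℂ)) ^ k * (-1)) (t:ℂ) := by
      simpa using ((hasDerivAt_id (t:ℂ)).const_sub 1).fun_pow (k+1)
    have h2 : HasDerivAt (fun s : ℂ => ((k:ℂ) + 1) + s) 1 (t:ℂ) :=
      (hasDerivAt_id _).const_add _
    have h3 : HasDerivAt (fun s : ℂ => Complex.exp (s * w))
        (Complex.exp ((t:ℂ) * w) * w) (t:ℂ) := (hasDerivAt_mul_const w).cexp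
    have h := ((h1.fun_mul h2).fun_mul h3).comp_ofReal
    convert h using 1
    rw [hf']
    push_cast
    ring
  have hint : IntervalIntegrable f' MeasureTheory.volume 0 1 := by
    apply Continuous.intervalIntegrable; rw [hf']; fun_prop
  have key := intervalIntegral.integral_eq_sub_of_hasDerivAt hderiv hint
  have e1 : ((1:ℂ) - ((1:ℝ):ℂ)) ^ (k+1) * (((k:ℂ) + 1) + ((1:ℝ):ℂ)) * Complex.exp (((1:ℝ):ℂ) * w)
      - (1 - ((0:ℝ):ℂ)) ^ (k+1) * (((k:ℂ) + 1) + ((0:ℝ):ℂ)) * Complex.exp (((0:ℝ):ℂ) * w)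
      = -(((k:ℂ)) + 1) := by
    push_cast
    simp [Complex.exp_zero]
  rw [e1] at key
  have split : ∫ t in (0:ℝ)..1, f' t
      = (-((k:ℂ) + 2)) * Bint k w + w * Bint (k+1) w := by
    rw [hf']
    rw [intervalIntegral.integral_add ((Continuous.intervalIntegrable (by fun_prop) _ _))
      ((Continuous.intervalIntegrable (by fun_prop) _ _))]
    congr 1
    · rw [Bint, ← intervalIntegral.integral_const_mul]
      apply intervalIntegral.integral_congr
      intro t _
      ring
    · rw [Bint, ← intervalIntegral.integral_const_mul]
      apply intervalIntegral.integral_congr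
      intro t _
      have : ((((k:ℕ)+1 : ℕ) : ℝ)) = ((k:ℝ) + 1) := by push_cast; ring
      simp only [this]
      ring
  rw [split] at key
  linear_combination key

lemma ident' (k : ℕ) (w : ℂ) :
    ((k+1).factorial : ℂ) * ((1 - w) * Complex.exp w
        - ∑ j ∈ Finset.range (k + 2), (1 - (j:ℂ)) / (j.factorial : ℂ) * w ^ j)
      = -(w ^ (k + 2)) * Bint k w := by
  induction k with
  | zero =>
    have hs : ∑ j ∈ Finset.range 2, (1 - (j:ℂ)) / (j.factorial : ℂ) * w ^ j = 1 := by
      simp [Finset.sum_range_succ]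
    rw [hs]
    simpa using Bbase w
  | succ k ih =>
    have hrec := Brec k w
    have hfac : (((k+1+1).factorial : ℕ) : ℂ) = ((k:ℂ) + 2) * (((k+1).factorial : ℕ) : ℂ) := by
      rw [Nat.factorial_succ]; push_cast; ring
    have hne : (((k+1+1).factorial : ℕ) : ℂ) ≠ 0 := Nat.cast_ne_zero.2 (Nat.factorial_ne_zero _)
    rw [show k + 1 + 2 = (k + 2) + 1 by ring, Finset.sum_range_succ]
    have hcan : (((k+1+1).factorial : ℕ) : ℂ)
        * ((1 - ((k+2 : ℕ):ℂ)) / (((k+2 : ℕ).factorial : ℕ) : ℂ))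
        = 1 - ((k+2 : ℕ):ℂ) := by
      rw [show (k+2 : ℕ) = k+1+1 by ring]
      exact mul_div_cancel₀ _ hne
    rw [hfac] at hcan ⊢
    linear_combination (norm := (push_cast; ring1))
      ((k:ℂ)+2) * ih - w^(k+2) * hcan + w^(k+2) * hrec

lemma Bbound (k : ℕ) (w : ℂ) :
    ‖Bint k w‖
      ≤ (∫ t in (0:ℝ)..1, Real.exp (t ^ 2 / 2) * (1 - t) ^ k * ((k : ℝ) + t))
          * Real.exp (‖w‖ ^ 2 / 2) := by
  have h1 : ‖Bint k w‖
      ≤ ∫ t in (0:ℝ)..1,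
          ‖(((1 - t) ^ k * ((k : ℝ) + t) : ℝ) : ℂ) * Complex.exp ((t:ℂ) * w)‖ := by
    have h := intervalIntegral.norm_integral_le_integral_norm
        (f := fun t : ℝ => (((1 - t) ^ k * ((k : ℝ) + t) : ℝ) : ℂ) * Complex.exp ((t:ℂ) * w))
        (a := 0) (b := 1) (μ := MeasureTheory.volume) (by norm_num)
    exact h
  have h2 : ∫ t in (0:ℝ)..1,
        ‖(((1 - t) ^ k * ((k : ℝ) + t) : ℝ) : ℂ) * Complex.exp ((t:ℂ) * w)‖
      ≤ ∫ t in (0:ℝ)..1,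
          Real.exp (t ^ 2 / 2) * (1 - t) ^ k * ((k : ℝ) + t)
            * Real.exp (‖w‖ ^ 2 / 2) := by
    apply intervalIntegral.integral_mono_on (by norm_num)
    · apply Continuous.intervalIntegrable
      exact continuous_norm.comp (by fun_prop)
    · apply Continuous.intervalIntegrable
      fun_prop
    · intro t ht
      obtain ⟨ht0, ht1⟩ := ht
      have hc : (0:ℝ) ≤ (1 - t) ^ k * ((k : ℝ) + t) := by
        apply mul_nonneg (pow_nonneg (by linarith) _)
        have := Nat.cast_nonneg (α := ℝ) k
        linarith
      rw [norm_mul, Complex.norm_exp, Complex.norm_real, Real.norm_eq_abs, _root_.abs_of_nonneg hc]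
      have hre : ((t:ℂ) * w).re = t * w.re := by simp
      rw [hre]
      have hexp : Real.exp (t * w.re)
          ≤ Real.exp (t ^ 2 / 2) * Real.exp (‖w‖ ^ 2 / 2) := by
        rw [← Real.exp_add]
        apply Real.exp_le_exp.2
        have h5 : t * w.re ≤ t * ‖w‖ :=
          mul_le_mul_of_nonneg_left (Complex.re_le_norm w) ht0
        nlinarith [sq_nonneg (t - ‖w‖)]
      calc (1 - t) ^ k * ((k : ℝ) + t) * Real.exp (t * w.re)
          ≤ (1 - t) ^ k * ((k : ℝ) + t)
              * (Real.exp (t ^ 2 / 2) * Real.exp (‖w‖ ^ 2 / 2)) := by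
            exact mul_le_mul_of_nonneg_left hexp hc
        _ = Real.exp (t ^ 2 / 2) * (1 - t) ^ k * ((k : ℝ) + t)
              * Real.exp (‖w‖ ^ 2 / 2) := by ring
  have h3 : ∫ t in (0:ℝ)..1,
        Real.exp (t ^ 2 / 2) * (1 - t) ^ k * ((k : ℝ) + t) * Real.exp (‖w‖ ^ 2 / 2)
      = (∫ t in (0:ℝ)..1, Real.exp (t ^ 2 / 2) * (1 - t) ^ k * ((k : ℝ) + t))
          * Real.exp (‖w‖ ^ 2 / 2) :=
    intervalIntegral.integral_mul_const _ _
  rw [h3] at h2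
  exact h1.trans h2

theorem abs_one_add_mul_exp_neg_taylor_bound (m : ℕ) (hm : 1 ≤ m) (z : ℂ) :
    ‖(1 + z) * Complex.exp (-z)
        + ∑ j ∈ Finset.range (m + 1), ((j : ℂ) - 1) / (j.factorial : ℂ) * (-z) ^ j‖
      ≤ ((1 : ℝ) / (m.factorial : ℝ)
            * ∫ t in (0:ℝ)..1, Real.exp (t ^ 2 / 2) * (1 - t) ^ (m - 1) * ((m : ℝ) - 1 + t))
          * ‖z‖ ^ (m + 1) * Real.exp (‖z‖ ^ 2 / 2) := by
  obtain ⟨k, rfl⟩ : ∃ k, m = k + 1 := ⟨m - 1, (Nat.succ_pred_eq_of_pos hm).symm⟩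
  have hE : (1 + z) * Complex.exp (-z)
        + ∑ j ∈ Finset.range (k + 1 + 1), ((j : ℂ) - 1) / (j.factorial : ℂ) * (-z) ^ j
      = (1 - (-z)) * Complex.exp (-z)
        - ∑ j ∈ Finset.range (k + 2), (1 - (j:ℂ)) / (j.factorial : ℂ) * (-z) ^ j := by
    have hsum : ∑ j ∈ Finset.range (k + 2), (1 - (j:ℂ)) / (j.factorial : ℂ) * (-z) ^ j
        = -∑ j ∈ Finset.range (k + 2), ((j:ℂ) - 1) / (j.factorial : ℂ) * (-z) ^ j := by
      rw [← Finset.sum_neg_distrib]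
      apply Finset.sum_congr rfl
      intros
      ring
    rw [hsum]
    ring_nf
  rw [hE]
  set w : ℂ := -z with hw
  have hid := ident' k w
  have habs : ((k+1).factorial : ℝ) * ‖(1 - w) * Complex.exp w
        - ∑ j ∈ Finset.range (k + 2), (1 - (j:ℂ)) / (j.factorial : ℂ) * w ^ j‖
      = ‖w‖ ^ (k + 2) * ‖Bint k w‖ := by
    have h := congrArg norm hid
    rw [norm_mul, norm_mul, norm_neg, norm_pow] at h
    simpa using h
  have hfacpos : (0:ℝ) < ((k+1).factorial : ℝ) := by
    exact_mod_cast Nat.factorial_pos (k+1)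
  have hEabs : ‖(1 - w) * Complex.exp w
        - ∑ j ∈ Finset.range (k + 2), (1 - (j:ℂ)) / (j.factorial : ℂ) * w ^ j‖
      = ‖w‖ ^ (k + 2) * ‖Bint k w‖ / ((k+1).factorial : ℝ) := by
    rw [eq_div_iff (ne_of_gt hfacpos), mul_comm, habs]
  rw [hEabs]
  have hzw : ‖z‖ = ‖w‖ := by rw [hw, norm_neg]
  rw [hzw]
  have hCint : (∫ t in (0:ℝ)..1,
        Real.exp (t ^ 2 / 2) * (1 - t) ^ (k + 1 - 1) * ((((k+1 : ℕ)) : ℝ) - 1 + t))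
      = ∫ t in (0:ℝ)..1, Real.exp (t ^ 2 / 2) * (1 - t) ^ k * ((k : ℝ) + t) := by
    apply intervalIntegral.integral_congr
    intro t _
    push_cast
    norm_num
  rw [hCint]
  rw [div_le_iff₀ hfacpos]
  have hb := Bbound k w
  have h1 : ‖w‖ ^ (k + 2) * ‖Bint k w‖
      ≤ ‖w‖ ^ (k + 2)
          * ((∫ t in (0:ℝ)..1, Real.exp (t ^ 2 / 2) * (1 - t) ^ k * ((k : ℝ) + t))
              * Real.exp (‖w‖ ^ 2 / 2)) := by
    apply mul_le_mul_of_nonneg_left hb (by positivity)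
  refine h1.trans (le_of_eq ?_)
  field_simp
end

section
/- For every complex number z, |(1+z)e^{−z} − e^{−z²/2}| ≤ c₂|z|³ e^{|z|²/2} + (|z|⁴/8) e^{|z|²/2}, where c₂ = (1/2)∫_0^1 e^{t²/2}(1−t²) dt. -/
open Complex intervalIntegral

/-- Derivative of the interpolating function
`K(t) = (1+tz)e^{-tz} - e^{-t²z²/2} + ((1-t²)/2)z²(e^{-t²z²/2} - e^{-tz})`. -/
lemma keyDeriv (z : ℂ) (t : ℝ) :
    HasDerivAt (fun s : ℝ => (1 + (s:ℂ) * z) * Complex.exp (-((s:ℂ) * z))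
        - Complex.exp (-((s:ℂ) ^ 2 * z ^ 2) / 2)
        + ((1 - (s:ℂ) ^ 2) / 2) * z ^ 2
            * (Complex.exp (-((s:ℂ) ^ 2 * z ^ 2) / 2) - Complex.exp (-((s:ℂ) * z))))
      (((1 - (t:ℂ) ^ 2) / 2) * (z ^ 3 * Complex.exp (-((t:ℂ) * z))
          - (t:ℂ) * z ^ 4 * Complex.exp (-((t:ℂ) ^ 2 * z ^ 2) / 2))) t := by
  have H : ∀ w : ℂ, HasDerivAt (fun w : ℂ => (1 + w * z) * Complex.exp (-(w * z))
        - Complex.exp (-(w ^ 2 * z ^ 2) / 2)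
        + ((1 - w ^ 2) / 2) * z ^ 2
            * (Complex.exp (-(w ^ 2 * z ^ 2) / 2) - Complex.exp (-(w * z))))
      (((1 - w ^ 2) / 2) * (z ^ 3 * Complex.exp (-(w * z))
          - w * z ^ 4 * Complex.exp (-(w ^ 2 * z ^ 2) / 2))) w := by
    intro w
    have hwz : HasDerivAt (fun w : ℂ => -(w * z)) (-z) w := by
      simpa using ((hasDerivAt_id w).mul_const z).fun_neg
    have hE1 : HasDerivAt (fun w : ℂ => Complex.exp (-(w * z)))
        (Complex.exp (-(w * z)) * (-z)) w := hwz.cexp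
    have hq : HasDerivAt (fun w : ℂ => -(w ^ 2 * z ^ 2) / 2)
        (-(2 * w * z ^ 2) / 2) w := by
      simpa using (((hasDerivAt_pow 2 w).mul_const (z ^ 2)).neg).div_const 2
    have hE2 : HasDerivAt (fun w : ℂ => Complex.exp (-(w ^ 2 * z ^ 2) / 2))
        (Complex.exp (-(w ^ 2 * z ^ 2) / 2) * (-(2 * w * z ^ 2) / 2)) w := hq.cexp
    have h1 : HasDerivAt (fun w : ℂ => (1 + w * z) * Complex.exp (-(w * z)))
        (z * Complex.exp (-(w * z)) + (1 + w * z) * (Complex.exp (-(w * z)) * (-z))) w := by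
      have : HasDerivAt (fun w : ℂ => 1 + w * z) z w := by
        simpa using ((hasDerivAt_id w).mul_const z).const_add 1
      exact this.mul hE1
    have h3 : HasDerivAt (fun w : ℂ => ((1 - w ^ 2) / 2) * z ^ 2
          * (Complex.exp (-(w ^ 2 * z ^ 2) / 2) - Complex.exp (-(w * z))))
        ((-(2 * w) / 2 * z ^ 2) * (Complex.exp (-(w ^ 2 * z ^ 2) / 2) - Complex.exp (-(w * z)))
          + ((1 - w ^ 2) / 2) * z ^ 2 *
            (Complex.exp (-(w ^ 2 * z ^ 2) / 2) * (-(2 * w * z ^ 2) / 2)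
              - Complex.exp (-(w * z)) * (-z))) w := by
      have hc : HasDerivAt (fun w : ℂ => ((1 - w ^ 2) / 2) * z ^ 2)
          (-(2 * w) / 2 * z ^ 2) w := by
        simpa using ((((hasDerivAt_pow 2 w).const_sub 1).div_const 2).mul_const (z ^ 2))
      exact hc.mul (hE2.sub hE1)
    have := (h1.sub hE2).add h3
    convert this using 1
    · rfl
    · rfl
    · rfl
    · ring
  simpa using (H t).comp_ofReal

/-- Integral representation of `(1+z)e^{-z} - e^{-z²/2}`. -/
lemma keyFTC (z : ℂ) :
    (1 + z) * Complex.exp (-z) - Complex.exp (-z ^ 2 / 2)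
      = ∫ t in (0:ℝ)..1, ((1 - (t:ℂ) ^ 2) / 2) * (z ^ 3 * Complex.exp (-((t:ℂ) * z))
          - (t:ℂ) * z ^ 4 * Complex.exp (-((t:ℂ) ^ 2 * z ^ 2) / 2)) := by
  have h := intervalIntegral.integral_eq_sub_of_hasDerivAt (a := (0:ℝ)) (b := 1)
    (f := fun s : ℝ => (1 + (s:ℂ) * z) * Complex.exp (-((s:ℂ) * z))
        - Complex.exp (-((s:ℂ) ^ 2 * z ^ 2) / 2)
        + ((1 - (s:ℂ) ^ 2) / 2) * z ^ 2
            * (Complex.exp (-((s:ℂ) ^ 2 * z ^ 2) / 2) - Complex.exp (-((s:ℂ) * z))))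
    (f' := fun t : ℝ => ((1 - (t:ℂ) ^ 2) / 2) * (z ^ 3 * Complex.exp (-((t:ℂ) * z))
          - (t:ℂ) * z ^ 4 * Complex.exp (-((t:ℂ) ^ 2 * z ^ 2) / 2)))
    (fun t _ => keyDeriv z t) ?_
  · rw [h]
    norm_num
  · apply Continuous.intervalIntegrable
    fun_prop

/-- Pointwise bound on the integrand. -/
lemma keyBound (z : ℂ) {t : ℝ} (ht : t ∈ Set.Icc (0:ℝ) 1) :
    ‖((1 - (t:ℂ) ^ 2) / 2) * (z ^ 3 * Complex.exp (-((t:ℂ) * z))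
        - (t:ℂ) * z ^ 4 * Complex.exp (-((t:ℂ) ^ 2 * z ^ 2) / 2))‖
      ≤ (Real.exp (t ^ 2 / 2) * (1 - t ^ 2)) / 2
          * (‖z‖ ^ 3 * Real.exp (‖z‖ ^ 2 / 2))
        + (t - t ^ 3) / 2 * (‖z‖ ^ 4 * Real.exp (‖z‖ ^ 2 / 2)) := by
  obtain ⟨ht0, ht1⟩ := ht
  set a := ‖z‖ with ha
  have ha0 : 0 ≤ a := norm_nonneg z
  have hc : ((1 - (t:ℂ) ^ 2) / 2) = (((1 - t ^ 2) / 2 : ℝ) : ℂ) := by push_cast; ring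
  have hE1 : ‖Complex.exp (-((t:ℂ) * z))‖
      ≤ Real.exp (t ^ 2 / 2) * Real.exp (a ^ 2 / 2) := by
    rw [Complex.norm_exp, ← Real.exp_add]
    apply Real.exp_le_exp.2
    have h1 : |z.re| ≤ a := Complex.abs_re_le_norm z
    have h2 : -z.re ≤ |z.re| := neg_le_abs z.re
    have : (-((t:ℂ) * z)).re = -(t * z.re) := by simp
    rw [this]
    nlinarith [sq_nonneg (t - a)]
  have hE2 : ‖Complex.exp (-((t:ℂ) ^ 2 * z ^ 2) / 2)‖
      ≤ Real.exp (a ^ 2 / 2) := by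
    rw [Complex.norm_exp]
    apply Real.exp_le_exp.2
    have h1 : |(z ^ 2).re| ≤ ‖z ^ 2‖ := Complex.abs_re_le_norm (z ^ 2)
    have h2 : -(z ^ 2).re ≤ |(z ^ 2).re| := neg_le_abs _
    have h3 : ‖z ^ 2‖ = a ^ 2 := by rw [norm_pow]
    have he : (-((t:ℂ) ^ 2 * z ^ 2) / 2).re = -(t ^ 2 * (z ^ 2).re) / 2 := by
      simp only [Complex.div_re, Complex.neg_re, Complex.neg_im, Complex.mul_re]
      rw [← Complex.ofReal_pow, Complex.ofReal_im, Complex.ofReal_re]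
      simp
      ring
    rw [he]
    nlinarith [mul_le_mul_of_nonneg_left (h2.trans (h1.trans_eq h3)) (sq_nonneg t),
      mul_nonneg (by nlinarith : (0:ℝ) ≤ 1 - t ^ 2) (sq_nonneg a)]
  rw [norm_mul, hc, Complex.norm_real, Real.norm_eq_abs,
    _root_.abs_of_nonneg (by nlinarith : (0:ℝ) ≤ (1 - t ^ 2) / 2)]
  have hT : ‖z ^ 3 * Complex.exp (-((t:ℂ) * z))
        - (t:ℂ) * z ^ 4 * Complex.exp (-((t:ℂ) ^ 2 * z ^ 2) / 2)‖
      ≤ a ^ 3 * (Real.exp (t ^ 2 / 2) * Real.exp (a ^ 2 / 2))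
        + t * (a ^ 4 * Real.exp (a ^ 2 / 2)) := by
    refine (norm_sub_le _ _).trans ?_
    gcongr
    · rw [norm_mul, norm_pow]
      gcongr
    · rw [norm_mul, norm_mul, Complex.norm_real, Real.norm_eq_abs, _root_.abs_of_nonneg ht0, norm_pow,
        mul_assoc]
      gcongr
  calc (1 - t ^ 2) / 2 * ‖_‖
      ≤ (1 - t ^ 2) / 2 * (a ^ 3 * (Real.exp (t ^ 2 / 2) * Real.exp (a ^ 2 / 2))
        + t * (a ^ 4 * Real.exp (a ^ 2 / 2))) := by
        apply mul_le_mul_of_nonneg_left hT (by nlinarith)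
    _ = (Real.exp (t ^ 2 / 2) * (1 - t ^ 2)) / 2 * (a ^ 3 * Real.exp (a ^ 2 / 2))
        + (t - t ^ 3) / 2 * (a ^ 4 * Real.exp (a ^ 2 / 2)) := by ring

theorem abs_one_add_mul_exp_neg_sub_exp_bound (z : ℂ) :
    ‖(1 + z) * Complex.exp (-z) - Complex.exp (-z ^ 2 / 2)‖
      ≤ ((1 / 2) * ∫ t in (0:ℝ)..1, Real.exp (t ^ 2 / 2) * (1 - t ^ 2))
            * ‖z‖ ^ 3 * Real.exp (‖z‖ ^ 2 / 2)
          + ‖z‖ ^ 4 / 8 * Real.exp (‖z‖ ^ 2 / 2) := by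
  set a := ‖z‖ with ha
  set E := Real.exp (a ^ 2 / 2) with hE
  set f : ℝ → ℂ := fun t : ℝ => ((1 - (t:ℂ) ^ 2) / 2) * (z ^ 3 * Complex.exp (-((t:ℂ) * z))
          - (t:ℂ) * z ^ 4 * Complex.exp (-((t:ℂ) ^ 2 * z ^ 2) / 2)) with hf
  set g : ℝ → ℝ := fun t : ℝ => (Real.exp (t ^ 2 / 2) * (1 - t ^ 2)) / 2 * (a ^ 3 * E)
        + (t - t ^ 3) / 2 * (a ^ 4 * E) with hg
  have hfc : Continuous f := by fun_prop
  have hgc : Continuous g := by fun_prop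
  have h1 : ‖(1 + z) * Complex.exp (-z) - Complex.exp (-z ^ 2 / 2)‖
      = ‖∫ t in (0:ℝ)..1, f t‖ := by
    exact congrArg _ (keyFTC z)
  rw [h1]
  have h2 : ‖∫ t in (0:ℝ)..1, f t‖ ≤ ∫ t in (0:ℝ)..1, ‖f t‖ :=
    intervalIntegral.norm_integral_le_integral_norm (by norm_num)
  have h3 : (∫ t in (0:ℝ)..1, ‖f t‖) ≤ ∫ t in (0:ℝ)..1, g t := by
    apply intervalIntegral.integral_mono_on (by norm_num)
      (hfc.norm.intervalIntegrable _ _) (hgc.intervalIntegrable _ _)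
    intro t ht
    exact keyBound z ht
  have h4 : (∫ t in (0:ℝ)..1, g t)
      = (∫ t in (0:ℝ)..1, (Real.exp (t ^ 2 / 2) * (1 - t ^ 2))) / 2 * (a ^ 3 * E)
        + (1 / 8) * (a ^ 4 * E) := by
    rw [hg]
    rw [intervalIntegral.integral_add (by apply Continuous.intervalIntegrable; fun_prop)
      (by apply Continuous.intervalIntegrable; fun_prop),
      intervalIntegral.integral_mul_const, intervalIntegral.integral_mul_const,
      intervalIntegral.integral_div, intervalIntegral.integral_div]
    norm_num
  refine (h2.trans h3).trans ?_
  rw [h4]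
  apply le_of_eq
  ring
end

section
/- Let ζ be a Poisson random variable with mean λ > 0 and define Z(m) = min{P(ζ ≤ m), P(ζ > m)}. Then for every integer m ≥ 0, Z(m) ≤ exp(−(m−λ)²/(2(m+λ))). -/
open Real Set

lemma aux_g_mono : MonotoneOn (fun x : ℝ => Real.log x + 4 * (x + 1)⁻¹) (Set.Ioi 0) := by
  apply monotoneOn_of_hasDerivWithinAt_nonneg (convex_Ioi 0)
    (f' := fun x => x⁻¹ + 4 * (-1 / (x + 1) ^ 2))
  · apply ContinuousOn.add
    · exact Real.continuousOn_log.mono (fun x hx => ne_of_gt hx)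
    · apply ContinuousOn.mul continuousOn_const
      apply ContinuousOn.inv₀ (by fun_prop)
      intro x hx; have : (0:ℝ) < x := hx; positivity
  · intro x hx
    rw [interior_Ioi] at hx
    have hx0 : (0:ℝ) < x := hx
    have hne : x + 1 ≠ 0 := by positivity
    have h1 : HasDerivAt Real.log x⁻¹ x := Real.hasDerivAt_log hx0.ne'
    have h2 : HasDerivAt (fun y : ℝ => (y + 1)⁻¹) (-1 / (x + 1) ^ 2) x := by
      exact (((hasDerivAt_id' x).add_const 1).inv hne).congr_deriv (by ring)
    exact ((h1.add (h2.const_mul 4)).hasDerivWithinAt).mono interior_subset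
  · intro x hx
    rw [interior_Ioi] at hx
    have hx0 : (0:ℝ) < x := hx
    have hne : x + 1 ≠ 0 := by positivity
    have : x⁻¹ + 4 * (-1 / (x + 1) ^ 2) = (x - 1) ^ 2 / (x * (x + 1) ^ 2) := by
      field_simp; ring
    rw [this]; positivity

lemma log_lower {x : ℝ} (hx : 1 ≤ x) : 2 - 4 * (x + 1)⁻¹ ≤ Real.log x := by
  have h := aux_g_mono (mem_Ioi.2 one_pos) (mem_Ioi.2 (lt_of_lt_of_le one_pos hx)) hx
  simp only [Real.log_one] at h
  norm_num at h
  linarith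

lemma log_upper {x : ℝ} (hx0 : 0 < x) (hx : x ≤ 1) : Real.log x ≤ 2 - 4 * (x + 1)⁻¹ := by
  have h := aux_g_mono (mem_Ioi.2 hx0) (mem_Ioi.2 one_pos) hx
  simp only [Real.log_one] at h
  norm_num at h
  linarith

lemma aux_F_hasDeriv {y : ℝ} (hy : 0 < y) :
    HasDerivAt (fun x : ℝ => x * Real.log x - 3 * x / 2 + 5 / 2 - 2 * (x + 1)⁻¹)
      (Real.log y - 1 / 2 + 2 * ((y + 1)⁻¹) ^ 2) y := by
  have hne : y + 1 ≠ 0 := by positivity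
  have h1 : HasDerivAt (fun z : ℝ => z * Real.log z) (Real.log y + 1) y := by
    have := (hasDerivAt_id y).mul (Real.hasDerivAt_log hy.ne')
    exact this.congr_deriv (by rw [id_eq, mul_inv_cancel₀ hy.ne']; ring)
  have h3 : HasDerivAt (fun z : ℝ => 3 * z / 2) (3 / 2) y := by
    simpa using ((hasDerivAt_id y).const_mul (3:ℝ)).div_const 2
  have h2 : HasDerivAt (fun z : ℝ => 2 * (z + 1)⁻¹) (2 * (-1 / (y + 1) ^ 2)) y := by
    exact ((((hasDerivAt_id' y).add_const 1).inv hne).congr_deriv (by ring) :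
      HasDerivAt (fun z : ℝ => (z + 1)⁻¹) (-1 / (y + 1) ^ 2) y).const_mul 2
  have h := ((h1.sub h3).add_const (5/2 : ℝ)).sub h2
  refine h.congr_deriv ?_
  field_simp
  ring

lemma aux_F_nonneg {x : ℝ} (hx : 0 < x) :
    0 ≤ x * Real.log x - 3 * x / 2 + 5 / 2 - 2 * (x + 1)⁻¹ := by
  set F : ℝ → ℝ := fun x => x * Real.log x - 3 * x / 2 + 5 / 2 - 2 * (x + 1)⁻¹ with hF
  have hF1 : F 1 = 0 := by simp [hF]; norm_num
  rcases le_total 1 x with h1x | h1x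
  · have hmono : MonotoneOn F (Set.Ici 1) := by
      apply monotoneOn_of_hasDerivWithinAt_nonneg (convex_Ici 1)
        (f' := fun y => Real.log y - 1 / 2 + 2 * ((y + 1)⁻¹) ^ 2)
      · intro y hy
        have hy0 : (0:ℝ) < y := lt_of_lt_of_le one_pos hy
        exact ((aux_F_hasDeriv hy0).continuousAt).continuousWithinAt
      · intro y hy
        rw [interior_Ici] at hy
        exact ((aux_F_hasDeriv (lt_trans one_pos hy)).hasDerivWithinAt).mono interior_subset
      · intro y hy
        rw [interior_Ici] at hy
        have hy1 : (1:ℝ) < y := hy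
        have hlog := log_lower hy1.le
        have hu1 : (0:ℝ) < (y+1)⁻¹ := by positivity
        have hu2 : (y+1)⁻¹ ≤ 1/2 := by
          rw [inv_le_comm₀ (by linarith) (by norm_num)]
          norm_num; linarith
        nlinarith [sq_nonneg ((y+1)⁻¹ - 1/2)]
    have := hmono (self_mem_Ici) h1x h1x
    rw [hF1] at this; exact this
  · have hanti : AntitoneOn F (Set.Ioc 0 1) := by
      apply antitoneOn_of_hasDerivWithinAt_nonpos (convex_Ioc 0 1)
        (f' := fun y => Real.log y - 1 / 2 + 2 * ((y + 1)⁻¹) ^ 2)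
      · intro y hy
        exact ((aux_F_hasDeriv hy.1).continuousAt).continuousWithinAt
      · intro y hy
        rw [interior_Ioc] at hy
        exact ((aux_F_hasDeriv hy.1).hasDerivWithinAt).mono interior_subset
      · intro y hy
        rw [interior_Ioc] at hy
        obtain ⟨hy0, hy1⟩ := hy
        have hlog := log_upper hy0 hy1.le
        have hu1 : (1:ℝ)/2 ≤ (y+1)⁻¹ := by
          rw [le_inv_comm₀ (by norm_num) (by linarith)]
          linarith
        have hu2 : (y+1)⁻¹ ≤ 1 := by
          rw [inv_le_comm₀ (by linarith) one_pos]
          linarith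
        nlinarith
    have := hanti (Set.mem_Ioc.2 ⟨hx, h1x⟩) (Set.mem_Ioc.2 ⟨one_pos, le_refl 1⟩) h1x
    rw [hF1] at this; exact this

lemma key_ineq {x : ℝ} (hx : 0 < x) :
    (x - 1) ^ 2 / (2 * (x + 1)) ≤ x * Real.log x - x + 1 := by
  have hne : x + 1 ≠ 0 := by positivity
  have h := aux_F_nonneg hx
  rw [← sub_nonneg]
  have heq : x * Real.log x - x + 1 - (x - 1) ^ 2 / (2 * (x + 1)) =
      x * Real.log x - 3 * x / 2 + 5 / 2 - 2 * (x + 1)⁻¹ := by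
    field_simp
    ring
  rw [heq]; exact h

lemma tsum_poisson (L y : ℝ) :
    ∑' k : ℕ, Real.exp (-L) * y ^ k / (k.factorial : ℝ) = Real.exp (y - L) := by
  have hexp : Real.exp y = ∑' k : ℕ, y ^ k / (k.factorial : ℝ) := by
    rw [Real.exp_eq_exp_ℝ, NormedSpace.exp_eq_tsum_div]
  have : ∀ k : ℕ, Real.exp (-L) * y ^ k / (k.factorial : ℝ)
      = Real.exp (-L) * (y ^ k / (k.factorial : ℝ)) := fun k => by ring
  simp only [this]
  rw [tsum_mul_left, ← hexp, ← Real.exp_add]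
  ring_nf

lemma summable_poisson (L y : ℝ) :
    Summable (fun k : ℕ => Real.exp (-L) * y ^ k / (k.factorial : ℝ)) := by
  have : ∀ k : ℕ, Real.exp (-L) * y ^ k / (k.factorial : ℝ)
      = Real.exp (-L) * (y ^ k / (k.factorial : ℝ)) := fun k => by ring
  simp only [this]
  exact (Real.summable_pow_div_factorial y).mul_left _
theorem poisson_tail_min_bound (L : ℝ) (hL : 0 < L) (m : ℕ) :
    min (∑ k ∈ Finset.range (m + 1), Real.exp (-L) * L ^ k / (k.factorial : ℝ))
        (∑' k : ℕ, if m < k then Real.exp (-L) * L ^ k / (k.factorial : ℝ) else 0)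
      ≤ Real.exp (-((m : ℝ) - L) ^ 2 / (2 * ((m : ℝ) + L))) := by
  rcases Nat.eq_zero_or_pos m with hm0 | hm1
  · subst hm0
    refine le_trans (min_le_left _ _) ?_
    have h0 : (∑ k ∈ Finset.range (0 + 1), Real.exp (-L) * L ^ k / (k.factorial : ℝ))
        = Real.exp (-L) := by norm_num
    rw [h0, Real.exp_le_exp, Nat.cast_zero]
    have h2 : -((0:ℝ) - L) ^ 2 / (2 * (0 + L)) = -L / 2 := by
      field_simp; ring
    rw [h2]; linarith
  · have hm0 : (0:ℝ) < m := by exact_mod_cast hm1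
    set c : ℝ := (m : ℝ) / L with hc
    have hc0 : 0 < c := div_pos hm0 hL
    have hcL : c * L = (m : ℝ) := div_mul_cancel₀ _ hL.ne'
    have hcm : (0:ℝ) < c ^ m := pow_pos hc0 m
    have hrw : Real.exp ((m:ℝ) - L - m * Real.log c) = Real.exp ((m:ℝ) - L) / c ^ m := by
      rw [Real.exp_sub]
      congr 1
      rw [← Real.log_pow, Real.exp_log (pow_pos hc0 m)]
    have hsum : ∀ k : ℕ, Real.exp (-L) * L ^ k / (k.factorial : ℝ) * c ^ k
        = Real.exp (-L) * (c * L) ^ k / (k.factorial : ℝ) := by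
      intro k; rw [mul_pow]; ring
    have step1 : min (∑ k ∈ Finset.range (m + 1), Real.exp (-L) * L ^ k / (k.factorial : ℝ))
        (∑' k : ℕ, if m < k then Real.exp (-L) * L ^ k / (k.factorial : ℝ) else 0)
        ≤ Real.exp ((m : ℝ) - L - m * Real.log c) := by
      rw [hrw, le_div_iff₀ hcm]
      rcases le_or_gt L (m : ℝ) with hLm | hLm
      · -- use upper tail
        have hc1 : 1 ≤ c := (one_le_div hL).2 hLm
        refine le_trans (mul_le_mul_of_nonneg_right (min_le_right _ _) hcm.le) ?_
        rw [← tsum_mul_right]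
        have hbound : ∀ k : ℕ,
            (if m < k then Real.exp (-L) * L ^ k / (k.factorial : ℝ) else 0) * c ^ m
            ≤ Real.exp (-L) * (c * L) ^ k / (k.factorial : ℝ) := by
          intro k
          split_ifs with h
          · calc Real.exp (-L) * L ^ k / (k.factorial : ℝ) * c ^ m
                ≤ Real.exp (-L) * L ^ k / (k.factorial : ℝ) * c ^ k := by
                  apply mul_le_mul_of_nonneg_left (pow_le_pow_right₀ hc1 h.le) (by positivity)
              _ = Real.exp (-L) * (c * L) ^ k / (k.factorial : ℝ) := hsum k
          · rw [zero_mul]; positivity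
        have hsummL : Summable (fun k : ℕ =>
            (if m < k then Real.exp (-L) * L ^ k / (k.factorial : ℝ) else 0) * c ^ m) := by
          apply Summable.mul_right
          apply Summable.of_nonneg_of_le (fun k => by positivity)
            (fun k => ?_) (summable_poisson L L)
          split_ifs with h
          · exact le_refl _
          · positivity
        calc (∑' k : ℕ, (if m < k then Real.exp (-L) * L ^ k / (k.factorial : ℝ) else 0) * c ^ m)
            ≤ ∑' k : ℕ, Real.exp (-L) * (c * L) ^ k / (k.factorial : ℝ) :=
              Summable.tsum_le_tsum hbound hsummL (summable_poisson L (c * L))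
          _ = Real.exp (c * L - L) := tsum_poisson L (c * L)
          _ = Real.exp ((m : ℝ) - L) := by rw [hcL]
      · -- use lower tail
        have hc1 : c ≤ 1 := (div_le_one hL).2 hLm.le
        refine le_trans (mul_le_mul_of_nonneg_right (min_le_left _ _) hcm.le) ?_
        rw [Finset.sum_mul]
        calc (∑ k ∈ Finset.range (m + 1),
              Real.exp (-L) * L ^ k / (k.factorial : ℝ) * c ^ m)
            ≤ ∑ k ∈ Finset.range (m + 1), Real.exp (-L) * (c * L) ^ k / (k.factorial : ℝ) := by
              apply Finset.sum_le_sum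
              intro k hk
              rw [← hsum k]
              apply mul_le_mul_of_nonneg_left
                (pow_le_pow_of_le_one hc0.le hc1 (Nat.lt_succ_iff.1 (Finset.mem_range.1 hk)))
                (by positivity)
          _ ≤ ∑' k : ℕ, Real.exp (-L) * (c * L) ^ k / (k.factorial : ℝ) :=
              Summable.sum_le_tsum _ (fun k _ => by positivity) (summable_poisson L (c * L))
          _ = Real.exp (c * L - L) := tsum_poisson L (c * L)
          _ = Real.exp ((m : ℝ) - L) := by rw [hcL]
    refine le_trans step1 ?_
    rw [Real.exp_le_exp]
    have hkey := key_ineq hc0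
    have hmul := mul_le_mul_of_nonneg_left hkey hL.le
    have e1 : L * ((c - 1) ^ 2 / (2 * (c + 1))) = ((m:ℝ) - L) ^ 2 / (2 * ((m:ℝ) + L)) := by
      rw [hc]
      have h1 : (m : ℝ) + L ≠ 0 := by positivity
      field_simp
    have e2 : L * (c * Real.log c - c + 1) = (m : ℝ) * Real.log c - (m : ℝ) + L := by
      have : L * (c * Real.log c - c + 1) = (c * L) * Real.log c - c * L + L := by ring
      rw [this, hcL]
    rw [e1, e2] at hmul
    rw [neg_div]
    linarith
end
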